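/- Invertibility criterion: a Fermat real x is invertible in the ring ⦁ℝ if and only if its standard part x(0) is nonzero. Moreover, if x = r + h with r = x(0) ≠ 0 and h infinitesimal of some order (so h^{n+1} = 0 for some n), then x⁻¹ = (1/r) · Σ_{j=0}^{n} (-1)^j (h/r)^j. -/

import Mathlib

open Filter Topology Set

/-- `f t = o(t)` as `t → 0⁺`. -/
def oT (f : ℝ → ℝ) : Prop :=
  Filter.Tendsto (fun t => f t / t) (nhdsWithin 0 (Set.Ioi 0)) (nhds 0)

/-- `x` is a little-oh polynomial. -/
def IsLittleOhPoly (x : ℝ → ℝ) : Prop :=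
  ∃ (k : ℕ) (r : ℝ) (α a : Fin k → ℝ) (w : ℝ → ℝ),
    (∀ i, 0 ≤ a i) ∧ w 0 = 0 ∧ oT w ∧
    ∀ t : ℝ, 0 ≤ t → x t = r + (∑ i, α i * t ^ (a i)) + w t

/-- Equality in the Fermat reals. -/
def FermatEq (x y : ℝ → ℝ) : Prop :=
  oT (fun t => x t - y t) ∧ x 0 = y 0

/-!
The standard part is multiplicative, so an invertible `x` has `x 0 ≠ 0`. Conversely,
`h = x - x 0` is `O(t ^ m)` as `t → 0⁺` for some `m > 0`: every exponent of a little-oh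
polynomial is either `0`, and then its term cancels in `h`, or positive, and the `o(t)` part is
`O(t)`. Hence `h ^ (n + 1) = O(t ^ (m (n + 1))) = o(t)` for `n` large. Little-oh polynomials form
an algebra, so the truncated geometric series `(1 / r) ∑_{j ≤ n} (-h / r) ^ j` is one, and by the
geometric sum formula `x` times it is `1 - (-h / r) ^ (n + 1) = 1 + o(t)`.
-/

open Asymptotics

lemma oT_iff_isLittleO {f : ℝ → ℝ} : oT f ↔ f =o[𝓝[>] 0] id :=
  (isLittleO_iff_tendsto' <| by
    filter_upwards [self_mem_nhdsWithin] with t (ht : 0 < t) h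
    exact absurd h ht.ne').symm

lemma oT.isBigO_one {w : ℝ → ℝ} (hw : oT w) : w =O[𝓝[>] 0] fun _ => (1 : ℝ) :=
  (oT_iff_isLittleO.1 hw).isBigO.trans ((tendsto_id.mono_left nhdsWithin_le_nhds).isBigO_one ℝ)

lemma oT.add {f g : ℝ → ℝ} (hf : oT f) (hg : oT g) : oT (f + g) :=
  oT_iff_isLittleO.2 ((oT_iff_isLittleO.1 hf).add (oT_iff_isLittleO.1 hg))

lemma oT.isBigO_one_mul {f w : ℝ → ℝ} (hf : f =O[𝓝[>] 0] fun _ => (1 : ℝ)) (hw : oT w) :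
    oT (f * w) :=
  oT_iff_isLittleO.2 <| (hf.mul_isLittleO (oT_iff_isLittleO.1 hw)).congr_right fun t => one_mul t

lemma oT.const_mul {f : ℝ → ℝ} (c : ℝ) (hf : oT f) : oT (fun t => c * f t) :=
  oT_iff_isLittleO.2 ((oT_iff_isLittleO.1 hf).const_mul_left c)

lemma oT_zero : oT 0 :=
  oT_iff_isLittleO.2 (isLittleO_zero _ _)

lemma isBigO_one_sum_mul_rpow {k : ℕ} (α a : Fin k → ℝ) (ha : ∀ i, 0 ≤ a i) :
    (fun t : ℝ => ∑ i, α i * t ^ a i) =O[𝓝[>] 0] fun _ => (1 : ℝ) := by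
  have h : Tendsto (fun t : ℝ => ∑ i, α i * t ^ a i) (𝓝[>] 0) (𝓝 (∑ i, α i * 0 ^ a i)) :=
    tendsto_finsetSum _ fun i _ => tendsto_const_nhds.mul
      ((Real.continuousAt_rpow_const 0 (a i) (Or.inr (ha i))).tendsto.mono_left nhdsWithin_le_nhds)
  exact h.isBigO_one ℝ

lemma isLittleOhPoly_iff {x : ℝ → ℝ} : IsLittleOhPoly x ↔ ∃ (k : ℕ) (α a : Fin k → ℝ) (w : ℝ → ℝ),
    (∀ i, 0 ≤ a i) ∧ w 0 = 0 ∧ oT w ∧ ∀ t : ℝ, 0 ≤ t → x t = (∑ i, α i * t ^ a i) + w t := by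
  constructor
  · rintro ⟨k, r, α, a, w, ha, hw0, hw, hx⟩
    refine ⟨k + 1, Fin.cons r α, Fin.cons 0 a, w, Fin.cases le_rfl ha, hw0, hw, fun t ht => ?_⟩
    simp [hx t ht, Fin.sum_univ_succ]
  · rintro ⟨k, α, a, w, ha, hw0, hw, hx⟩
    exact ⟨k, 0, α, a, w, ha, hw0, hw, fun t ht => by rw [hx t ht, zero_add]⟩

lemma isLittleOhPoly_const (c : ℝ) : IsLittleOhPoly fun _ => c :=
  ⟨0, c, Fin.elim0, Fin.elim0, 0, fun i => i.elim0, rfl, oT_zero, fun t _ => by simp⟩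

lemma IsLittleOhPoly.add {x y : ℝ → ℝ} (hx : IsLittleOhPoly x) (hy : IsLittleOhPoly y) :
    IsLittleOhPoly (x + y) := by
  obtain ⟨k, r, α, a, w, ha, hw0, hw, hx⟩ := hx
  obtain ⟨l, s, β, b, v, hb, hv0, hv, hy⟩ := hy
  refine ⟨k + l, r + s, Fin.append α β, Fin.append a b, w + v,
    Fin.addCases (fun i => by simpa using ha i) (fun i => by simpa using hb i),
    by simp [hw0, hv0], hw.add hv, fun t ht => ?_⟩
  simp only [Pi.add_apply, hx t ht, hy t ht, Fin.sum_univ_add, Fin.append_left, Fin.append_right]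
  ring

lemma IsLittleOhPoly.mul {x y : ℝ → ℝ} (hx : IsLittleOhPoly x) (hy : IsLittleOhPoly y) :
    IsLittleOhPoly (x * y) := by
  obtain ⟨k, α, a, w, ha, hw0, hw, hx⟩ := isLittleOhPoly_iff.1 hx
  obtain ⟨l, β, b, v, hb, hv0, hv, hy⟩ := isLittleOhPoly_iff.1 hy
  set p : ℝ → ℝ := fun t => ∑ i, α i * t ^ a i
  set q : ℝ → ℝ := fun t => ∑ j, β j * t ^ b j
  let e : Fin (k * l) ≃ Fin k × Fin l := finProdFinEquiv.symm
  refine isLittleOhPoly_iff.2 ⟨k * l, fun i => α (e i).1 * β (e i).2,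
    fun i => a (e i).1 + b (e i).2, p * v + q * w + w * v, fun i => add_nonneg (ha _) (hb _),
    by simp [hw0, hv0], ?_, fun t ht => ?_⟩
  · have hp := isBigO_one_sum_mul_rpow α a ha
    have hq := isBigO_one_sum_mul_rpow β b hb
    exact ((hv.isBigO_one_mul hp).add (hw.isBigO_one_mul hq)).add (hv.isBigO_one_mul hw.isBigO_one)
  · have hpq : ∑ i, α (e i).1 * β (e i).2 * t ^ (a (e i).1 + b (e i).2) = p t * q t := by
      rw [e.sum_comp fun ij => α ij.1 * β ij.2 * t ^ (a ij.1 + b ij.2), Fintype.sum_prod_type,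
        Finset.sum_mul_sum]
      refine Finset.sum_congr rfl fun i _ => Finset.sum_congr rfl fun j _ => ?_
      rw [Real.rpow_add_of_nonneg ht (ha i) (hb j)]
      ring
    simp only [Pi.add_apply, Pi.mul_apply, hx t ht, hy t ht, hpq]
    ring

def littleOhPolySubalgebra : Subalgebra ℝ (ℝ → ℝ) where
  carrier := {x | IsLittleOhPoly x}
  mul_mem' := IsLittleOhPoly.mul
  add_mem' := IsLittleOhPoly.add
  algebraMap_mem' := isLittleOhPoly_const

noncomputable def neumannInv (r : ℝ) (n : ℕ) (u : ℝ) : ℝ :=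
  (1 / r) * ∑ j ∈ Finset.range (n + 1), (-1) ^ j * ((u - r) / r) ^ j

lemma IsLittleOhPoly.neumannInv_comp {x : ℝ → ℝ} (hx : IsLittleOhPoly x) (r : ℝ) (n : ℕ) :
    IsLittleOhPoly fun t => neumannInv r n (x t) := by
  let S := littleOhPolySubalgebra
  have hS : (fun t => neumannInv r n (x t)) =
      (1 / r) • ∑ j ∈ Finset.range (n + 1),
        (-1 : ℝ) ^ j • (r⁻¹ • (x - algebraMap ℝ (ℝ → ℝ) r)) ^ j := by
    ext t
    simp [neumannInv, Finset.sum_apply, div_eq_inv_mul]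
  rw [hS]
  exact S.smul_mem (S.sum_mem fun j _ =>
    S.smul_mem (S.pow_mem (S.smul_mem (S.sub_mem hx (S.algebraMap_mem r)) _) _) _) _

lemma mul_neumannInv_sub_one {r : ℝ} (hr : r ≠ 0) (n : ℕ) (u : ℝ) :
    u * neumannInv r n u - 1 = -(-1 / r) ^ (n + 1) * (u - r) ^ (n + 1) := by
  set s := (u - r) / r
  have hu : u * (1 / r) = 1 - -s := by simp only [s]; field_simp; ring
  calc u * neumannInv r n u - 1
      = (1 - -s) * ∑ j ∈ Finset.range (n + 1), (-s) ^ j - 1 := by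
        simp only [neumannInv, neg_pow s, ← hu]
        ring
    _ = -(-s) ^ (n + 1) := by rw [mul_neg_geom_sum]; ring
    _ = -(-1 / r) ^ (n + 1) * (u - r) ^ (n + 1) := by
        rw [show -s = -1 / r * (u - r) by ring, mul_pow]
        ring

lemma rpow_isBigO_rpow_of_le {m m' : ℝ} (h : m ≤ m') :
    (fun t : ℝ => t ^ m') =O[𝓝[>] 0] fun t => t ^ m := by
  refine IsBigO.of_bound 1 ?_
  filter_upwards [Ioo_mem_nhdsGT one_pos] with t ⟨ht0, ht1⟩
  rw [one_mul, Real.norm_of_nonneg (by positivity), Real.norm_of_nonneg (by positivity)]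
  exact Real.rpow_le_rpow_of_exponent_ge ht0 ht1.le h

def HasPositiveOrder (f : ℝ → ℝ) : Prop :=
  ∃ m : ℝ, 0 < m ∧ f =O[𝓝[>] 0] fun t => t ^ m

lemma hasPositiveOrder_zero : HasPositiveOrder fun _ => 0 :=
  ⟨1, one_pos, isBigO_zero _ _⟩

lemma HasPositiveOrder.add {f g : ℝ → ℝ} (hf : HasPositiveOrder f) (hg : HasPositiveOrder g) :
    HasPositiveOrder (f + g) := by
  obtain ⟨m, hm, hf⟩ := hf
  obtain ⟨m', hm', hg⟩ := hg
  exact ⟨min m m', lt_min hm hm', (hf.trans (rpow_isBigO_rpow_of_le (min_le_left _ _))).add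
    (hg.trans (rpow_isBigO_rpow_of_le (min_le_right _ _)))⟩

lemma HasPositiveOrder.congr' {f g : ℝ → ℝ} (hf : HasPositiveOrder f) (h : f =ᶠ[𝓝[>] 0] g) :
    HasPositiveOrder g :=
  let ⟨m, hm, hf⟩ := hf
  ⟨m, hm, hf.congr' h EventuallyEq.rfl⟩

lemma oT.hasPositiveOrder {w : ℝ → ℝ} (hw : oT w) : HasPositiveOrder w :=
  ⟨1, one_pos, (oT_iff_isLittleO.1 hw).isBigO.congr_right fun t => (Real.rpow_one t).symm⟩

lemma hasPositiveOrder_const_mul_rpow_sub (c : ℝ) {a : ℝ} (ha : 0 ≤ a) :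
    HasPositiveOrder fun t => c * (t ^ a - 0 ^ a) := by
  rcases ha.eq_or_lt with rfl | ha
  · simpa only [Real.rpow_zero, sub_self, mul_zero] using hasPositiveOrder_zero
  · refine ⟨a, ha, ?_⟩
    simpa [Real.zero_rpow ha.ne'] using (isBigO_refl (fun t : ℝ => t ^ a) _).const_mul_left c

lemma HasPositiveOrder.exists_oT_pow {f : ℝ → ℝ} (hf : HasPositiveOrder f) :
    ∃ n : ℕ, oT fun t => f t ^ (n + 1) := by
  obtain ⟨m, hm, hf⟩ := hf
  obtain ⟨n, hn⟩ := exists_nat_gt (2 / m)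
  have h2 : 2 ≤ m * (n + 1 : ℕ) := by
    rw [div_lt_iff₀ hm] at hn
    push_cast
    nlinarith
  have hpow : (fun t => f t ^ (n + 1)) =O[𝓝[>] 0] fun t => t ^ (m * (n + 1 : ℕ)) := by
    refine (hf.pow (n + 1)).congr' EventuallyEq.rfl ?_
    filter_upwards [self_mem_nhdsWithin] with t (ht : 0 < t)
    rw [Real.rpow_mul_natCast ht.le]
  have hsq : (fun t : ℝ => t ^ (2 : ℝ)) =o[𝓝[>] 0] id :=
    ((isLittleO_pow_id one_lt_two).mono nhdsWithin_le_nhds).congr_left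
      fun t => (Real.rpow_two t).symm
  exact ⟨n, oT_iff_isLittleO.2 <|
    hpow.trans_isLittleO ((rpow_isBigO_rpow_of_le h2).trans_isLittleO hsq)⟩

lemma IsLittleOhPoly.hasPositiveOrder_sub_apply_zero {x : ℝ → ℝ} (hx : IsLittleOhPoly x) :
    HasPositiveOrder fun t => x t - x 0 := by
  obtain ⟨k, r, α, a, w, ha, hw0, hw, hx⟩ := hx
  have hsum : HasPositiveOrder (∑ i, fun t => α i * (t ^ a i - 0 ^ a i)) :=
    Finset.sum_induction _ _ (fun _ _ => HasPositiveOrder.add) hasPositiveOrder_zero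
      fun i _ => hasPositiveOrder_const_mul_rpow_sub (α i) (ha i)
  refine (hsum.add hw.hasPositiveOrder).congr' ?_
  filter_upwards [self_mem_nhdsWithin] with t (ht : 0 < t)
  simp only [Pi.add_apply, Finset.sum_apply, hx t ht.le, hx 0 le_rfl, hw0, mul_sub,
    Finset.sum_sub_distrib]
  ring

lemma fermatEq_mul_neumannInv {x : ℝ → ℝ} {n : ℕ} (hr : x 0 ≠ 0)
    (h : oT fun t => (x t - x 0) ^ (n + 1)) :
    FermatEq (fun t => x t * neumannInv (x 0) n (x t)) 1 := by
  refine ⟨?_, ?_⟩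
  · simpa only [Pi.one_apply, mul_neumannInv_sub_one hr] using h.const_mul (-(-1 / x 0) ^ (n + 1))
  · have h0 := mul_neumannInv_sub_one hr n (x 0)
    rwa [sub_self, zero_pow n.succ_ne_zero, mul_zero, sub_eq_zero] at h0

/-- A Fermat real `x` is invertible iff its standard part `x 0` is nonzero;
moreover, writing `x = r + h` with `r = x 0 ≠ 0` and `h := x - r` infinitesimal
with `h ^ (n+1) = 0` in the Fermat reals, the inverse is given by the finite
geometric series `x⁻¹ = (1/r) * ∑ j ≤ n, (-1)^j * (h/r)^j`. -/
theorem invertible_iff_standardPart_ne_zero (x : ℝ → ℝ) (hx : IsLittleOhPoly x) :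
    ((∃ y : ℝ → ℝ, IsLittleOhPoly y ∧ FermatEq (x * y) 1) ↔ x 0 ≠ 0) ∧
    (∀ n : ℕ, x 0 ≠ 0 →
      FermatEq (fun t => (x t - x 0) ^ (n + 1)) 0 →
      FermatEq (fun t => x t * ((1 / x 0) *
        ∑ j ∈ Finset.range (n + 1), (-1) ^ j * ((x t - x 0) / x 0) ^ j)) 1) := by
  refine ⟨⟨?_, fun hr => ?_⟩, fun n hr h => fermatEq_mul_neumannInv hr (by simpa using h.1)⟩
  · rintro ⟨y, -, -, hxy⟩ hx0
    simp [hx0] at hxy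
  · obtain ⟨n, hn⟩ := hx.hasPositiveOrder_sub_apply_zero.exists_oT_pow
    exact ⟨_, hx.neumannInv_comp (x 0) n, fermatEq_mul_neumannInv hr hn⟩
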